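/- The trigraded 𝔽₂-algebra 𝔽₂[h₁₀, h₁₁, y₇₄, y₁₂₈] / (h₁₀h₁₁, h₁₁³, h₁₁y₇₄, y₇₄² − h₁₀²y₁₂₈), with |h₁₀| = (1,0), |h₁₁| = (2,1), |y₇₄| = (7,4), |y₁₂₈| = (12,8), is, as a module over 𝔽₂[y₁₂₈], free on the quotient 𝔽₂[h₁₀, h₁₁, y₇₄]/(h₁₀h₁₁, h₁₁³, y₇₄²); in particular its bigraded dimensions are (12,8)-periodic in the sense that multiplication by y₁₂₈ is injective and dim of bidegree (g+12, d+8) equals dim of bidegree (g,d) plus corrections supported only on the finite set of generators of the module. -/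

import Mathlib

open MvPolynomial

set_option synthInstance.maxHeartbeats 1000000
set_option maxHeartbeats 2000000

/-- The defining ideal of the `E∞`-page:
`(h₁₀h₁₁, h₁₁³, h₁₁y₇₄, y₇₄² − h₁₀²y₁₂₈)` in `𝔽₂[h₁₀,h₁₁,y₇₄,y₁₂₈]`,
where the variables `X 0, X 1, X 2, X 3` stand for `h₁₀, h₁₁, y₇₄, y₁₂₈`. -/
noncomputable def I15 : Ideal (MvPolynomial (Fin 4) (ZMod 2)) :=
  Ideal.span {X 0 * X 1, (X 1) ^ 3, X 1 * X 2, (X 2) ^ 2 - (X 0) ^ 2 * X 3}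

/-- The ring `R = 𝔽₂[h₁₀,h₁₁,y₇₄,y₁₂₈]/(h₁₀h₁₁, h₁₁³, h₁₁y₇₄, y₇₄² − h₁₀²y₁₂₈)`. -/
abbrev R15 := MvPolynomial (Fin 4) (ZMod 2) ⧸ I15

noncomputable def h10 : R15 := Ideal.Quotient.mk I15 (X 0)
noncomputable def h11 : R15 := Ideal.Quotient.mk I15 (X 1)
noncomputable def y74 : R15 := Ideal.Quotient.mk I15 (X 2)
noncomputable def y128 : R15 := Ideal.Quotient.mk I15 (X 3)

/-- The structure map making `R` a module over `𝔽₂[y₁₂₈]` (the polynomial variable is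
sent to `y₁₂₈`). -/
noncomputable def φ15 : Polynomial (ZMod 2) →+* R15 :=
  (Polynomial.aeval y128).toRingHom

namespace Aux15

abbrev P2 := Polynomial (ZMod 2)
abbrev T2 := Polynomial P2
abbrev A3 := AdjoinRoot (Polynomial.X ^ 3 : Polynomial P2)

noncomputable instance instMod : Module P2 R15 := Module.compHom R15 φ15

lemma smul_def (c : P2) (r : R15) : c • r = φ15 c * r := rfl

noncomputable def v15 : (ℕ × Fin 2) ⊕ Fin 2 → R15 := fun i =>
  match i with
  | .inl (a, e) => if e = 0 then h10 ^ a else h10 ^ a * y74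
  | .inr j => if j = 0 then h11 else h11 ^ 2

-- basic relations
lemma rel1 : h10 * h11 = 0 := by
  rw [h10, h11, ← map_mul, Ideal.Quotient.eq_zero_iff_mem]
  exact Ideal.subset_span (by simp)

lemma rel2 : h11 ^ 3 = 0 := by
  rw [h11, ← map_pow, Ideal.Quotient.eq_zero_iff_mem]
  exact Ideal.subset_span (by simp)

lemma rel3 : h11 * y74 = 0 := by
  rw [h11, y74, ← map_mul, Ideal.Quotient.eq_zero_iff_mem]
  exact Ideal.subset_span (by simp)

lemma rel4 : y74 ^ 2 = h10 ^ 2 * y128 := by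
  rw [y74, h10, y128, ← map_pow, ← map_pow, ← map_mul, Ideal.Quotient.mk_eq_mk_iff_sub_mem]
  exact Ideal.subset_span (by simp)

lemma ysmul (r : R15) : (Polynomial.X : P2) • r = y128 * r := by
  rw [smul_def]
  congr 1
  show (Polynomial.aeval y128) Polynomial.X = y128
  simp

end Aux15

namespace Aux15

open Polynomial in
noncomputable def g1 : Fin 4 → T2 :=
  ![Polynomial.X, 0, Polynomial.X * Polynomial.C Polynomial.X,
    Polynomial.C (Polynomial.X ^ 2)]

open Polynomial in
noncomputable def g2 : Fin 4 → A3 :=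
  ![0, AdjoinRoot.root _, 0, algebraMap P2 A3 Polynomial.X]

lemma g1_kills : ∀ a ∈ I15, (aeval g1) a = 0 := by
  intro a ha
  have hker : I15 ≤ RingHom.ker (aeval g1).toRingHom := by
    rw [I15, Ideal.span_le]
    rintro x hx
    simp only [Set.mem_insert_iff, Set.mem_singleton_iff] at hx
    have e0 : g1 0 = Polynomial.X := rfl
    have e1 : g1 1 = 0 := rfl
    have e2 : g1 2 = Polynomial.X * Polynomial.C Polynomial.X := rfl
    have e3 : g1 3 = Polynomial.C (Polynomial.X ^ 2) := rfl
    rcases hx with rfl | rfl | rfl | rfl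
    · show (aeval g1) _ = 0
      rw [map_mul, aeval_X, aeval_X, e1, mul_zero]
    · show (aeval g1) _ = 0
      rw [map_pow, aeval_X, e1]
      exact zero_pow (by norm_num)
    · show (aeval g1) _ = 0
      rw [map_mul, aeval_X, aeval_X, e1, zero_mul]
    · show (aeval g1) _ = 0
      rw [map_sub, map_pow, map_mul, map_pow, aeval_X, aeval_X, aeval_X, e0, e2, e3,
        mul_pow, ← Polynomial.C_pow, sub_self]
  exact hker ha

lemma rootcube : (AdjoinRoot.root (Polynomial.X ^ 3 : Polynomial P2)) ^ 3 = 0 := by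
  rw [← AdjoinRoot.mk_X, ← map_pow, AdjoinRoot.mk_self]

lemma g2_kills : ∀ a ∈ I15, (aeval g2) a = 0 := by
  intro a ha
  have hker : I15 ≤ RingHom.ker (aeval g2).toRingHom := by
    rw [I15, Ideal.span_le]
    rintro x hx
    simp only [Set.mem_insert_iff, Set.mem_singleton_iff] at hx
    have e0 : g2 0 = 0 := rfl
    have e1 : g2 1 = AdjoinRoot.root _ := rfl
    have e2 : g2 2 = 0 := rfl
    rcases hx with rfl | rfl | rfl | rfl
    · show (aeval g2) _ = 0
      rw [map_mul, aeval_X, aeval_X, e0, zero_mul]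
    · show (aeval g2) _ = 0
      rw [map_pow, aeval_X, e1, rootcube]
    · show (aeval g2) _ = 0
      rw [map_mul, aeval_X, aeval_X, e1, e2, mul_zero]
    · show (aeval g2) _ = 0
      rw [map_sub, map_pow, map_mul, map_pow, aeval_X, aeval_X, aeval_X, e0, e2]
      simp
  exact hker ha

noncomputable def Ψ1 : R15 →ₐ[ZMod 2] T2 := Ideal.Quotient.liftₐ I15 (aeval g1) g1_kills
noncomputable def Ψ2 : R15 →ₐ[ZMod 2] A3 := Ideal.Quotient.liftₐ I15 (aeval g2) g2_kills

lemma Ψ1_mk (p) : Ψ1 (Ideal.Quotient.mk I15 p) = aeval g1 p :=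
  Ideal.Quotient.liftₐ_apply _ _ _ _

lemma Ψ2_mk (p) : Ψ2 (Ideal.Quotient.mk I15 p) = aeval g2 p :=
  Ideal.Quotient.liftₐ_apply _ _ _ _

end Aux15

namespace Aux15

lemma v15_inl0 (a : ℕ) : v15 (.inl (a, 0)) = h10 ^ a := rfl
lemma v15_inl1 (a : ℕ) : v15 (.inl (a, 1)) = h10 ^ a * y74 := rfl
lemma v15_inr0 : v15 (.inr 0) = h11 := rfl
lemma v15_inr1 : v15 (.inr 1) = h11 ^ 2 := rfl

lemma Ψ1_h10 : Ψ1 h10 = Polynomial.X := by rw [h10, Ψ1_mk, aeval_X]; rfl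
lemma Ψ1_h11 : Ψ1 h11 = 0 := by rw [h11, Ψ1_mk, aeval_X]; rfl
lemma Ψ1_y74 : Ψ1 y74 = Polynomial.X * Polynomial.C Polynomial.X := by
  rw [y74, Ψ1_mk, aeval_X]; rfl
lemma Ψ2_h10 : Ψ2 h10 = 0 := by rw [h10, Ψ2_mk, aeval_X]; rfl
lemma Ψ2_h11 : Ψ2 h11 = AdjoinRoot.root _ := by rw [h11, Ψ2_mk, aeval_X]; rfl
lemma Ψ2_y74 : Ψ2 y74 = 0 := by rw [y74, Ψ2_mk, aeval_X]; rfl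

lemma Ψ1_pow (b : ℕ) : Ψ1 (h10 ^ b) = Polynomial.X ^ b := by rw [map_pow, Ψ1_h10]

lemma aeval_Xsq : (Polynomial.aeval (Polynomial.X ^ 2 : P2)) = (Polynomial.expand (ZMod 2) 2) :=
  Polynomial.algHom_ext (by simp)

lemma Ψ1_smul (c : P2) (r : R15) :
    Ψ1 (c • r) = Polynomial.C ((Polynomial.expand (ZMod 2) 2) c) * Ψ1 r := by
  rw [smul_def, map_mul]
  congr 1
  show Ψ1 (Polynomial.aeval y128 c) = _
  rw [← Polynomial.aeval_algHom_apply]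
  have hy : Ψ1 y128 = algebraMap P2 T2 (Polynomial.X ^ 2) := by
    rw [y128, Ψ1_mk, aeval_X]
    rfl
  rw [hy, Polynomial.aeval_algebraMap_apply, aeval_Xsq]
  rfl

lemma Ψ2_smul (c : P2) (r : R15) : Ψ2 (c • r) = algebraMap P2 A3 c * Ψ2 r := by
  rw [smul_def, map_mul]
  congr 1
  show Ψ2 (Polynomial.aeval y128 c) = _
  rw [← Polynomial.aeval_algHom_apply]
  have hy : Ψ2 y128 = algebraMap P2 A3 Polynomial.X := by
    rw [y128, Ψ2_mk, aeval_X]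
    rfl
  rw [hy, Polynomial.aeval_algebraMap_apply, Polynomial.aeval_X_left_apply]

lemma coeff_expand2 (c : P2) (k : ℕ) :
    ((Polynomial.expand (ZMod 2) 2) c).coeff (2 * k) = c.coeff k := by
  rw [Polynomial.coeff_expand (by norm_num)]
  simp [Nat.mul_div_cancel_left]

lemma coeff_expand2_odd (c : P2) (k : ℕ) :
    ((Polynomial.expand (ZMod 2) 2) c).coeff (2 * k + 1) = 0 := by
  rw [Polynomial.coeff_expand (by norm_num), if_neg (by omega)]

lemma coeff_X_mul_expand_even (c : P2) (k : ℕ) :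
    (Polynomial.X * (Polynomial.expand (ZMod 2) 2) c).coeff (2 * k) = 0 := by
  cases k with
  | zero =>
      rw [show 2 * 0 = 0 by ring, Polynomial.mul_coeff_zero, Polynomial.coeff_X_zero, zero_mul]
  | succ k =>
      rw [show 2 * (k + 1) = (2 * k + 1) + 1 by ring, Polynomial.coeff_X_mul]
      exact coeff_expand2_odd _ _

end Aux15

namespace Aux15

lemma E0_term (a k : ℕ) (i : (ℕ × Fin 2) ⊕ Fin 2) (c : P2) :
    ((Ψ1 (c • v15 i)).coeff a).coeff (2 * k)
      = if i = Sum.inl (a, (0 : Fin 2)) then c.coeff k else 0 := by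
  rw [Ψ1_smul]
  rcases i with ⟨b, e⟩ | j
  · fin_cases e <;> simp only [Fin.zero_eta, Fin.mk_one]
    · rw [v15_inl0, Ψ1_pow, Polynomial.coeff_C_mul, Polynomial.coeff_X_pow]
      rcases eq_or_ne a b with hab | hab
      · subst hab
        rw [if_pos rfl, mul_one, coeff_expand2, if_pos rfl]
      · rw [if_neg hab, mul_zero, Polynomial.coeff_zero,
          if_neg (by simp [Ne.symm hab])]
    · rw [v15_inl1, map_mul, Ψ1_pow, Ψ1_y74]
      have h : Polynomial.C ((Polynomial.expand (ZMod 2) 2) c) *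
            (Polynomial.X ^ b * (Polynomial.X * Polynomial.C Polynomial.X))
          = Polynomial.C (Polynomial.X * (Polynomial.expand (ZMod 2) 2) c) *
            Polynomial.X ^ (b + 1) := by
        rw [Polynomial.C_mul]
        ring
      rw [h, Polynomial.coeff_C_mul, Polynomial.coeff_X_pow]
      rcases eq_or_ne a (b + 1) with hab | hab
      · rw [if_pos hab, mul_one, coeff_X_mul_expand_even, if_neg (by simp)]
      · rw [if_neg hab, mul_zero, Polynomial.coeff_zero, if_neg (by simp)]
  · fin_cases j <;> simp only [Fin.zero_eta, Fin.mk_one]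
    · rw [v15_inr0, Ψ1_h11, mul_zero]
      simp
    · rw [v15_inr1, map_pow, Ψ1_h11, zero_pow (by norm_num), mul_zero]
      simp

lemma E1_term (a k : ℕ) (i : (ℕ × Fin 2) ⊕ Fin 2) (c : P2) :
    ((Ψ1 (c • v15 i)).coeff (a + 1)).coeff (2 * k + 1)
      = if i = Sum.inl (a, (1 : Fin 2)) then c.coeff k else 0 := by
  rw [Ψ1_smul]
  rcases i with ⟨b, e⟩ | j
  · fin_cases e <;> simp only [Fin.zero_eta, Fin.mk_one]
    · rw [v15_inl0, Ψ1_pow, Polynomial.coeff_C_mul, Polynomial.coeff_X_pow]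
      rcases eq_or_ne (a + 1) b with hab | hab
      · rw [if_pos hab, mul_one, coeff_expand2_odd, if_neg (by simp)]
      · rw [if_neg hab, mul_zero, Polynomial.coeff_zero, if_neg (by simp)]
    · rw [v15_inl1, map_mul, Ψ1_pow, Ψ1_y74]
      have h : Polynomial.C ((Polynomial.expand (ZMod 2) 2) c) *
            (Polynomial.X ^ b * (Polynomial.X * Polynomial.C Polynomial.X))
          = Polynomial.C (Polynomial.X * (Polynomial.expand (ZMod 2) 2) c) *
            Polynomial.X ^ (b + 1) := by
        rw [Polynomial.C_mul]
        ring
      rw [h, Polynomial.coeff_C_mul, Polynomial.coeff_X_pow]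
      rcases eq_or_ne a b with hab | hab
      · subst hab
        rw [if_pos rfl, mul_one, Polynomial.coeff_X_mul, coeff_expand2, if_pos rfl]
      · rw [if_neg (by omega), mul_zero, Polynomial.coeff_zero,
          if_neg (by simp [Ne.symm hab])]
  · fin_cases j <;> simp only [Fin.zero_eta, Fin.mk_one]
    · rw [v15_inr0, Ψ1_h11, mul_zero]
      simp
    · rw [v15_inr1, map_pow, Ψ1_h11, zero_pow (by norm_num), mul_zero]
      simp

noncomputable def md : A3 →ₗ[P2] Polynomial P2 :=
  AdjoinRoot.modByMonicHom (Polynomial.monic_X_pow 3)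

lemma md_term (c : P2) (j : ℕ) (hj : j < 3) :
    md (algebraMap P2 A3 c * AdjoinRoot.root _ ^ j) = Polynomial.C c * Polynomial.X ^ j := by
  have h : algebraMap P2 A3 c * AdjoinRoot.root _ ^ j
      = AdjoinRoot.mk _ (Polynomial.C c * Polynomial.X ^ j) := by
    rw [map_mul, map_pow, AdjoinRoot.mk_C, AdjoinRoot.mk_X, AdjoinRoot.algebraMap_eq]
  rw [h, md, AdjoinRoot.modByMonicHom_mk]
  rw [(Polynomial.modByMonic_eq_self_iff (Polynomial.monic_X_pow 3)).2]
  refine lt_of_le_of_lt (Polynomial.degree_C_mul_X_pow_le j c) ?_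
  rw [Polynomial.degree_X_pow]
  exact_mod_cast hj

lemma F_term (m : ℕ) (hm : m = 1 ∨ m = 2) (i : (ℕ × Fin 2) ⊕ Fin 2) (c : P2) :
    (md (Ψ2 (c • v15 i))).coeff m
      = if i = Sum.inr (if m = 1 then (0 : Fin 2) else 1) then c else 0 := by
  rw [Ψ2_smul]
  rcases i with ⟨b, e⟩ | j
  · fin_cases e <;> simp only [Fin.zero_eta, Fin.mk_one]
    · rw [v15_inl0, map_pow, Ψ2_h10]
      cases b with
      | zero =>
          rw [pow_zero, mul_one,
            show (algebraMap P2 A3) c = (algebraMap P2 A3) c * AdjoinRoot.root _ ^ 0 by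
              rw [pow_zero, mul_one],
            md_term c 0 (by norm_num)]
          rw [pow_zero, mul_one, Polynomial.coeff_C, if_neg (by omega)]
          simp
      | succ b =>
          rw [zero_pow (by omega), mul_zero, map_zero, Polynomial.coeff_zero]
          simp
    · rw [v15_inl1, map_mul Ψ2 (h10 ^ b) y74, Ψ2_y74, mul_zero, mul_zero, map_zero,
        Polynomial.coeff_zero]
      simp
  · fin_cases j <;> simp only [Fin.zero_eta, Fin.mk_one]
    · rw [v15_inr0, Ψ2_h11]
      rw [show (algebraMap P2 A3) c * AdjoinRoot.root (Polynomial.X ^ 3 : Polynomial P2) =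
          (algebraMap P2 A3) c * AdjoinRoot.root _ ^ 1 by rw [pow_one],
        md_term c 1 (by norm_num)]
      rw [Polynomial.coeff_C_mul, Polynomial.coeff_X_pow]
      rcases hm with rfl | rfl <;> simp
    · rw [v15_inr1, map_pow, Ψ2_h11, md_term c 2 (by norm_num)]
      rw [Polynomial.coeff_C_mul, Polynomial.coeff_X_pow]
      rcases hm with rfl | rfl <;> simp

end Aux15

namespace Aux15

abbrev M15 := ((ℕ × Fin 2) ⊕ Fin 2) →₀ P2

lemma sum_extract {N : Type} [AddCommMonoid N] (l : M15) (E : R15 →+ N)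
    (i₀ : (ℕ × Fin 2) ⊕ Fin 2) (ε : P2 → N) (hε : ε 0 = 0)
    (h : ∀ i c, E (c • v15 i) = if i = i₀ then ε c else 0)
    (hl : Finsupp.linearCombination P2 v15 l = 0) : ε (l i₀) = 0 := by
  have h0 : E (Finsupp.linearCombination P2 v15 l) = 0 := by rw [hl, map_zero]
  rw [Finsupp.linearCombination_apply, map_finsuppSum] at h0
  have h1 : (l.sum fun i c => E (c • v15 i))
      = l.sum fun i c => if i = i₀ then ε c else 0 :=
    Finsupp.sum_congr (fun i _ => h i (l i))
  rw [h1, Finsupp.sum_ite_eq'] at h0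
  by_cases hs : i₀ ∈ l.support
  · rwa [if_pos hs] at h0
  · rw [Finsupp.notMem_support_iff.1 hs, hε]

noncomputable def E0hom (a k : ℕ) : R15 →+ ZMod 2 where
  toFun r := ((Ψ1 r).coeff a).coeff (2 * k)
  map_zero' := by simp
  map_add' x y := by simp [map_add, Polynomial.coeff_add]

noncomputable def E1hom (a k : ℕ) : R15 →+ ZMod 2 where
  toFun r := ((Ψ1 r).coeff (a + 1)).coeff (2 * k + 1)
  map_zero' := by simp
  map_add' x y := by simp [map_add, Polynomial.coeff_add]

noncomputable def Fhom (m : ℕ) : R15 →+ P2 where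
  toFun r := (md (Ψ2 r)).coeff m
  map_zero' := by simp
  map_add' x y := by simp [map_add, Polynomial.coeff_add]

lemma linind : LinearIndependent P2 v15 := by
  rw [linearIndependent_iff]
  intro l hl
  have key : ∀ i, l i = 0 := by
    intro i
    rcases i with ⟨a, e⟩ | j
    · fin_cases e <;> simp only [Fin.zero_eta, Fin.mk_one]
      · refine Polynomial.ext fun k => ?_
        rw [Polynomial.coeff_zero]
        exact sum_extract l (E0hom a k) (Sum.inl (a, 0)) (fun c => c.coeff k)
          (by simp) (fun i c => E0_term a k i c) hl
      · refine Polynomial.ext fun k => ?_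
        rw [Polynomial.coeff_zero]
        exact sum_extract l (E1hom a k) (Sum.inl (a, 1)) (fun c => c.coeff k)
          (by simp) (fun i c => E1_term a k i c) hl
    · fin_cases j <;> simp only [Fin.zero_eta, Fin.mk_one]
      · exact sum_extract l (Fhom 1) (Sum.inr 0) id rfl
          (fun i c => by show (md (Ψ2 (c • v15 i))).coeff 1 = _; simpa using F_term 1 (Or.inl rfl) i c) hl
      · exact sum_extract l (Fhom 2) (Sum.inr 1) id rfl
          (fun i c => by show (md (Ψ2 (c • v15 i))).coeff 2 = _; simpa using F_term 2 (Or.inr rfl) i c) hl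
  exact Finsupp.ext key

noncomputable def S15 : Submodule P2 R15 := Submodule.span P2 (Set.range v15)

lemma hmem : ∀ i, v15 i ∈ S15 := fun i => Submodule.subset_span ⟨i, rfl⟩

lemma mul_mem_of_gen (g : R15) (hbase : ∀ i, v15 i * g ∈ S15) :
    ∀ r ∈ S15, r * g ∈ S15 := by
  intro r hr
  induction hr using Submodule.span_induction with
  | mem x hx => obtain ⟨i, rfl⟩ := hx; exact hbase i
  | zero => rw [zero_mul]; exact zero_mem _
  | add x y _ _ hx hy => rw [add_mul]; exact add_mem hx hy
  | smul c x _ hx =>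
      rw [smul_def, mul_assoc, ← smul_def]
      exact Submodule.smul_mem _ _ hx

lemma base_h10 : ∀ i, v15 i * h10 ∈ S15 := by
  rintro (⟨a, e⟩ | j)
  · fin_cases e <;> simp only [Fin.zero_eta, Fin.mk_one]
    · rw [v15_inl0, ← pow_succ]
      exact hmem (Sum.inl (a + 1, 0))
    · rw [v15_inl1, show h10 ^ a * y74 * h10 = h10 ^ (a + 1) * y74 by ring]
      exact hmem (Sum.inl (a + 1, 1))
  · fin_cases j <;> simp only [Fin.zero_eta, Fin.mk_one]
    · rw [v15_inr0, mul_comm, rel1]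
      exact zero_mem _
    · rw [v15_inr1, show h11 ^ 2 * h10 = h10 * h11 * h11 by ring, rel1, zero_mul]
      exact zero_mem _

lemma base_h11 : ∀ i, v15 i * h11 ∈ S15 := by
  rintro (⟨a, e⟩ | j)
  · fin_cases e <;> simp only [Fin.zero_eta, Fin.mk_one]
    · rw [v15_inl0]
      cases a with
      | zero => rw [pow_zero, one_mul]; exact hmem (Sum.inr 0)
      | succ b =>
          rw [show h10 ^ (b + 1) * h11 = h10 * h11 * h10 ^ b by ring, rel1, zero_mul]
          exact zero_mem _
    · rw [v15_inl1, show h10 ^ a * y74 * h11 = h11 * y74 * h10 ^ a by ring, rel3, zero_mul]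
      exact zero_mem _
  · fin_cases j <;> simp only [Fin.zero_eta, Fin.mk_one]
    · rw [v15_inr0, ← pow_two]
      exact hmem (Sum.inr 1)
    · rw [v15_inr1, ← pow_succ, rel2]
      exact zero_mem _

lemma base_y74 : ∀ i, v15 i * y74 ∈ S15 := by
  rintro (⟨a, e⟩ | j)
  · fin_cases e <;> simp only [Fin.zero_eta, Fin.mk_one]
    · rw [v15_inl0, ← v15_inl1]
      exact hmem _
    · rw [v15_inl1, show h10 ^ a * y74 * y74 = h10 ^ a * y74 ^ 2 by ring, rel4,
        show h10 ^ a * (h10 ^ 2 * y128) = y128 * h10 ^ (a + 2) by ring, ← ysmul, ← v15_inl0]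
      exact Submodule.smul_mem _ _ (hmem (Sum.inl (a + 2, 0)))
  · fin_cases j <;> simp only [Fin.zero_eta, Fin.mk_one]
    · rw [v15_inr0, rel3]
      exact zero_mem _
    · rw [v15_inr1, show h11 ^ 2 * y74 = h11 * y74 * h11 by ring, rel3, zero_mul]
      exact zero_mem _

lemma base_y128 : ∀ i, v15 i * y128 ∈ S15 := by
  intro i
  rw [mul_comm, ← ysmul]
  exact Submodule.smul_mem _ _ (hmem i)

lemma span_top : ∀ r : R15, r ∈ S15 := by
  intro r
  obtain ⟨p, rfl⟩ := Ideal.Quotient.mk_surjective r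
  induction p using MvPolynomial.induction_on with
  | C a =>
      have hall : ∀ b : ZMod 2, b = 0 ∨ b = 1 := by decide
      rcases hall a with rfl | rfl
      · rw [map_zero, map_zero]
        exact zero_mem _
      · rw [map_one, map_one]
        rw [show (1 : R15) = v15 (Sum.inl (0, 0)) by rw [v15_inl0, pow_zero]]
        exact hmem _
  | add p q hp hq => rw [map_add]; exact add_mem hp hq
  | mul_X p j hp =>
      rw [map_mul]
      fin_cases j
      · exact mul_mem_of_gen h10 base_h10 _ hp
      · exact mul_mem_of_gen h11 base_h11 _ hp
      · exact mul_mem_of_gen y74 base_y74 _ hp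
      · exact mul_mem_of_gen y128 base_y128 _ hp

end Aux15

namespace Aux15

noncomputable def b15 : Module.Basis ((ℕ × Fin 2) ⊕ Fin 2) P2 R15 :=
  Module.Basis.mk linind (fun r _ => span_top r)

lemma b15_apply (i) : b15 i = v15 i := Module.Basis.mk_apply _ _ _

end Aux15

open Aux15

/-- `R` is, as a module over `𝔽₂[y₁₂₈]`, free on (a monomial basis of) the quotient
`𝔽₂[h₁₀,h₁₁,y₇₄]/(h₁₀h₁₁, h₁₁³, y₇₄²)`, namely on
`{h₁₀^a}ₐ ∪ {h₁₀^a y₇₄}ₐ ∪ {h₁₁, h₁₁²}`; in particular multiplication by `y₁₂₈` is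
injective, so the bigraded dimensions are `(12,8)`-periodic. -/
theorem E_infinity_page_free_over_y :
    Function.Injective (fun r : R15 => y128 * r) ∧
    (letI : Module (Polynomial (ZMod 2)) R15 := Module.compHom R15 φ15
     ∃ b : Module.Basis ((ℕ × Fin 2) ⊕ Fin 2) (Polynomial (ZMod 2)) R15,
       (∀ a : ℕ, b (Sum.inl (a, 0)) = h10 ^ a) ∧
       (∀ a : ℕ, b (Sum.inl (a, 1)) = h10 ^ a * y74) ∧
       b (Sum.inr 0) = h11 ∧ b (Sum.inr 1) = h11 ^ 2) := by
  constructor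
  · intro r r' h
    simp only at h
    have h0 : (Polynomial.X : P2) • (r - r') = 0 := by
      rw [ysmul, mul_sub, h, sub_self]
    have hz : b15.repr (r - r') = 0 := by
      have h2 : (Polynomial.X : P2) • b15.repr (r - r') = 0 := by
        rw [← map_smul, h0, map_zero]
      refine Finsupp.ext fun i => ?_
      have h3 : ((Polynomial.X : P2) • b15.repr (r - r')) i = 0 := by rw [h2]; rfl
      rw [Finsupp.smul_apply, smul_eq_mul] at h3
      exact (mul_eq_zero.1 h3).resolve_left Polynomial.X_ne_zero
    have h4 : r - r' = 0 := by
      apply b15.repr.injective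
      simp [hz]
    exact sub_eq_zero.1 h4
  · refine ⟨b15, fun a => ?_, fun a => ?_, ?_, ?_⟩
    · rw [b15_apply, v15_inl0]
    · rw [b15_apply, v15_inl1]
    · rw [b15_apply, v15_inr0]
    · rw [b15_apply, v15_inr1]
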